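/- (Alexandrov's Lemma) Let p,x,y,z be distinct points in a geodesic metric space with z on a geodesic segment [x,y]. Then the quantities ∠̄_x([x,p],[x,y]) − ∠̄_x([x,p],[x,z]) and ∠̄_z([z,p],[z,x]) + ∠̄_z([z,p],[z,y]) − π have the same sign. -/

import Mathlib

/-!
Put `u = |xp|`, `v = |zp|`, `w = |yp|`, `α = |xz|`, `β = |zy|`, so that `|xy| = α + β`. By the
law of cosines, each of the two quantities is a difference of arccosines whose arguments differ by
a positive multiple of the Stewart defect; for the second one this uses
`arccos (-s) = π - arccos s`.
Since `arccos` is strictly decreasing, both quantities have the sign of the defect.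
-/

open Set

/-- The Euclidean comparison angle at `a` between `b` and `c`. -/
noncomputable def compAngle {X : Type*} [MetricSpace X] (a b c : X) : ℝ :=
  Real.arccos ((dist a b ^ 2 + dist a c ^ 2 - dist b c ^ 2) / (2 * dist a b * dist a c))

open Real

namespace Real

lemma sign_eq_sign_of_iff {a b : ℝ} (hpos : 0 < a ↔ 0 < b) (hneg : a < 0 ↔ b < 0) :
    sign a = sign b := by
  simp only [sign, hpos, hneg]

lemma sign_div_of_pos {a d : ℝ} (hd : 0 < d) : sign (a / d) = sign a :=
  sign_eq_sign_of_iff (div_pos_iff_of_pos_right hd) (by rw [div_lt_iff₀ hd, zero_mul])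

lemma sign_sub_of_strictAntiOn {f : ℝ → ℝ} {s : Set ℝ} (hf : StrictAntiOn f s) {a b : ℝ}
    (ha : a ∈ s) (hb : b ∈ s) : sign (f a - f b) = sign (b - a) :=
  sign_eq_sign_of_iff (by rw [sub_pos, sub_pos, hf.lt_iff_gt hb ha])
    (by rw [sub_neg, sub_neg, hf.lt_iff_gt ha hb])

lemma sign_arccos_sub_arccos {s t : ℝ} (hs : s ∈ Icc (-1) 1) (ht : t ∈ Icc (-1) 1) :
    sign (arccos s - arccos t) = sign (t - s) :=
  sign_sub_of_strictAntiOn strictAntiOn_arccos hs ht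

lemma sign_arccos_add_arccos_sub_pi {s t : ℝ} (hs : s ∈ Icc (-1) 1) (ht : t ∈ Icc (-1) 1) :
    sign (arccos s + arccos t - π) = sign (-s - t) := by
  have hs' : -s ∈ Icc (-1) 1 := ⟨by linarith [hs.2], by linarith [hs.1]⟩
  rw [← sign_arccos_sub_arccos ht hs', arccos_neg]
  ring_nf

end Real

-- Law of cosines: the cosine of the angle between the sides `a` and `b` of a triangle with
-- third side `c`.
noncomputable def triangleCos (a b c : ℝ) : ℝ := (a ^ 2 + b ^ 2 - c ^ 2) / (2 * a * b)

lemma triangleCos_mem_Icc {a b c : ℝ} (ha : 0 < a) (hb : 0 < b) (hc : c ≤ a + b)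
    (ha' : a ≤ b + c) (hb' : b ≤ a + c) : triangleCos a b c ∈ Icc (-1) 1 := by
  have hab : 0 < 2 * a * b := by positivity
  constructor
  · rw [triangleCos, le_div_iff₀ hab]; nlinarith
  · rw [triangleCos, div_le_one hab]; nlinarith

lemma triangleCos_dist_mem_Icc {X : Type*} [MetricSpace X] {a b c : X} (hab : a ≠ b)
    (hac : a ≠ c) : triangleCos (dist a b) (dist a c) (dist b c) ∈ Icc (-1) 1 :=
  triangleCos_mem_Icc (dist_pos.2 hab) (dist_pos.2 hac) (dist_triangle_left _ _ _)
    (dist_triangle_right _ _ _) (dist_triangle _ _ _)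

lemma compAngle_eq_arccos_triangleCos {X : Type*} [MetricSpace X] (a b c : X) :
    compAngle a b c = arccos (triangleCos (dist a b) (dist a c) (dist b c)) :=
  rfl

-- Its vanishing is Stewart's relation for a cevian of length `v` splitting the side `α + β` of a
-- triangle with the other sides `u` and `w` into `α` (next to `u`) and `β`.
def stewartDefect (u v w α β : ℝ) : ℝ :=
  β * u ^ 2 + α * w ^ 2 - (α + β) * v ^ 2 - α * β * (α + β)

section Stewart

variable {u v w α β : ℝ}

lemma triangleCos_sub_triangleCos_add (hu : u ≠ 0) (hα : α ≠ 0) (hαβ : α + β ≠ 0) :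
    triangleCos u α v - triangleCos u (α + β) w =
      stewartDefect u v w α β / (2 * u * α * (α + β)) := by
  unfold triangleCos stewartDefect
  field_simp
  ring

lemma neg_triangleCos_sub_triangleCos (hv : v ≠ 0) (hα : α ≠ 0) (hβ : β ≠ 0) :
    -triangleCos v α u - triangleCos v β w = stewartDefect u v w α β / (2 * v * α * β) := by
  unfold triangleCos stewartDefect
  field_simp
  ring

end Stewart

theorem alexandrov_lemma_general {X : Type*} [MetricSpace X]
    (p x y z : X)
    (hpx : p ≠ x) (hpz : p ≠ z)
    (hxz : x ≠ z) (hyz : y ≠ z)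
    (hz : dist x z + dist z y = dist x y) :
    Real.sign (compAngle x p y - compAngle x p z) =
      Real.sign (compAngle z p x + compAngle z p y - Real.pi) := by
  have hu : 0 < dist x p := dist_pos.2 hpx.symm
  have hv : 0 < dist z p := dist_pos.2 hpz.symm
  have hα : 0 < dist x z := dist_pos.2 hxz
  have hβ : 0 < dist z y := dist_pos.2 hyz.symm
  have hxy : x ≠ y := dist_pos.1 (hz ▸ add_pos hα hβ)
  simp only [compAngle_eq_arccos_triangleCos]
  rw [sign_arccos_sub_arccos (triangleCos_dist_mem_Icc hpx.symm hxy)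
      (triangleCos_dist_mem_Icc hpx.symm hxz),
    sign_arccos_add_arccos_sub_pi (triangleCos_dist_mem_Icc hpz.symm hxz.symm)
      (triangleCos_dist_mem_Icc hpz.symm hyz.symm),
    dist_comm p z, dist_comm z x, dist_comm p x, ← hz,
    triangleCos_sub_triangleCos_add hu.ne' hα.ne' (by positivity),
    neg_triangleCos_sub_triangleCos hv.ne' hα.ne' hβ.ne',
    sign_div_of_pos (by positivity), sign_div_of_pos (by positivity)]

/-- (Alexandrov's Lemma) For distinct points `p, x, y, z` of a geodesic metric space with
`z` on a geodesic segment from `x` to `y`, the quantities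
`∠̄_x(p,y) − ∠̄_x(p,z)` and `∠̄_z(p,x) + ∠̄_z(p,y) − π` have the same sign. -/
theorem alexandrov_lemma {X : Type*} [MetricSpace X]
    (hgeo : ∀ a b : X, ∃ γ : ℝ → X, γ 0 = a ∧ γ 1 = b ∧
      ∀ s ∈ Set.Icc (0:ℝ) 1, ∀ t ∈ Set.Icc (0:ℝ) 1,
        dist (γ s) (γ t) = dist a b * |s - t|)
    (p x y z : X)
    (hpx : p ≠ x) (hpy : p ≠ y) (hpz : p ≠ z)
    (hxy : x ≠ y) (hxz : x ≠ z) (hyz : y ≠ z)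
    (hz : dist x z + dist z y = dist x y) :
    Real.sign (compAngle x p y - compAngle x p z) =
      Real.sign (compAngle z p x + compAngle z p y - Real.pi) :=
  alexandrov_lemma_general p x y z hpx hpz hxz hyz hz
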